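/- arXiv:2107.10103 — 2 statements merged into one kernel-verified Lean document; each statement's English description precedes it below -/
import Mathlib

section
/- A family Φ = (φ_x)_{x∈X} in F^n is a continuous frame if and only if Φ ∈ L²(X,μ;F^n) and det(Gram(Φ¹,…,Φⁿ)) > 0, where the Gram matrix is taken in L²(X,μ;F). -/
open MeasureTheory ENNReal

variable {𝕜 : Type*} [RCLike 𝕜] {X : Type*} [MeasurableSpace X]

/-- `Φ` is a continuous frame in `𝕜ⁿ`: a measurable family with
`A ‖v‖² ≤ ∫ |⟨v, φ_x⟩|² dμ ≤ B ‖v‖²` for some `0 < A ≤ B`. -/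
def IsContFrame (μ : Measure X) {n : ℕ} (Φ : X → EuclideanSpace 𝕜 (Fin n)) : Prop :=
  AEStronglyMeasurable Φ μ ∧ ∃ A B : ℝ, 0 < A ∧ A ≤ B ∧
    ∀ v : EuclideanSpace 𝕜 (Fin n),
      ENNReal.ofReal (A * ‖v‖ ^ 2) ≤ ∫⁻ x, (‖(inner 𝕜 v (Φ x) : 𝕜)‖₊ : ℝ≥0∞) ^ 2 ∂μ ∧
      ∫⁻ x, (‖(inner 𝕜 v (Φ x) : 𝕜)‖₊ : ℝ≥0∞) ^ 2 ∂μ ≤ ENNReal.ofReal (B * ‖v‖ ^ 2)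

/-- The Gram matrix in `L²(X, μ; 𝕜)` of the coordinate functions `Φ¹, …, Φⁿ`,
with `(k,l)`-entry `⟨Φ^k, Φ^l⟩ = ∫ Φ^k(x) conj (Φ^l(x)) dμ(x)`. -/
noncomputable def gramL2 (μ : Measure X) {n : ℕ} (Φ : X → EuclideanSpace 𝕜 (Fin n)) :
    Matrix (Fin n) (Fin n) 𝕜 :=
  fun k l => ∫ x, Φ x k * starRingEnd 𝕜 (Φ x l) ∂μ

/-! For `Φ ∈ L²`, the frame integral `∫ |⟨v, φ_x⟩|² dμ` is the quadratic form `v* G v` of the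
Gram matrix `G`, so `G` is positive semidefinite and the frame inequalities say that this form is
comparable to `‖v‖²`. A lower bound makes `G` positive definite; conversely, a positive definite
form is bounded above and below on the compact unit sphere, and 2-homogeneity spreads these
bounds to all of `𝕜ⁿ`. For positive semidefinite `G`, positive definiteness is `det G ≠ 0`, and
then `det G > 0`. Finally, the upper frame bound at the basis vectors puts every coordinate of
`Φ` in `L²`. -/

open scoped ComplexOrder Matrix InnerProductSpace

section Homogeneous

variable {E : Type*} [NormedAddCommGroup E] [NormedSpace ℝ E] [ProperSpace E]

lemma exists_bounds_of_continuous_of_homogeneous {q : E → ℝ} (hq : Continuous q)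
    (hsmul : ∀ (r : ℝ) v, q (r • v) = r ^ 2 * q v) (hpos : ∀ v, v ≠ 0 → 0 < q v) :
    ∃ A B : ℝ, 0 < A ∧ A ≤ B ∧ ∀ v, A * ‖v‖ ^ 2 ≤ q v ∧ q v ≤ B * ‖v‖ ^ 2 := by
  have hS := isCompact_sphere (0 : E) 1
  obtain ⟨A, hA, hAq⟩ := hS.exists_forall_le' hq.continuousOn
    fun v hv => hpos v (by rintro rfl; simp at hv)
  obtain ⟨B, hBq⟩ := hS.bddAbove_image hq.continuousOn
  refine ⟨A, max A B, hA, le_max_left _ _, fun v => ?_⟩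
  rcases eq_or_ne v 0 with rfl | hv
  · have h0 : q 0 = 0 := by simpa using hsmul 0 0
    simp [h0]
  have hv' : 0 < ‖v‖ := norm_pos_iff.2 hv
  have hu : ‖v‖⁻¹ • v ∈ Metric.sphere (0 : E) 1 := by
    simp [norm_smul, hv'.ne']
  have hqv : q v = q (‖v‖⁻¹ • v) * ‖v‖ ^ 2 := by
    rw [← mul_comm, ← hsmul, smul_inv_smul₀ hv'.ne']
  rw [hqv]
  exact ⟨by gcongr; exact hAq _ hu,
    by gcongr; exact (hBq ⟨_, hu, rfl⟩).trans (le_max_right _ _)⟩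

end Homogeneous

section LTwo

variable {μ : Measure X} {E : Type*} [NormedAddCommGroup E] {f : X → E}

lemma memLp_two_iff_lintegral_nnnorm_sq_lt_top (hf : AEStronglyMeasurable f μ) :
    MemLp f 2 μ ↔ ∫⁻ x, (‖f x‖₊ : ℝ≥0∞) ^ 2 ∂μ < ⊤ := by
  rw [MemLp, and_iff_right hf,
    eLpNorm_lt_top_iff_lintegral_rpow_enorm_lt_top two_ne_zero ENNReal.ofNat_ne_top]
  simp [enorm_eq_nnnorm]

lemma MeasureTheory.MemLp.lintegral_nnnorm_sq_eq (hf : MemLp f 2 μ) :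
    ∫⁻ x, (‖f x‖₊ : ℝ≥0∞) ^ 2 ∂μ = ENNReal.ofReal (∫ x, ‖f x‖ ^ 2 ∂μ) := by
  rw [ofReal_integral_eq_lintegral_ofReal ((memLp_two_iff_integrable_sq_norm hf.1).1 hf)
    (Filter.Eventually.of_forall fun x => sq_nonneg _)]
  simp [ENNReal.ofReal_pow, ofReal_norm, enorm_eq_nnnorm]

end LTwo

section Gram

variable {μ : Measure X} {n : ℕ} {Φ : X → EuclideanSpace 𝕜 (Fin n)}

lemma isHermitian_gramL2 : (gramL2 μ Φ).IsHermitian := by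
  ext k l
  simp only [Matrix.conjTranspose_apply, gramL2, RCLike.star_def, ← integral_conj, map_mul,
    RCLike.conj_conj, mul_comm]

lemma integrable_gramL2_integrand (hΦ : MemLp Φ 2 μ) (k l : Fin n) :
    Integrable (fun x => Φ x k * starRingEnd 𝕜 (Φ x l)) μ :=
  (memLp_piLp_iff.1 hΦ k).integrable_mul (memLp_piLp_iff.1 hΦ l).star

lemma ofReal_norm_inner_sq_eq_sum (v w : EuclideanSpace 𝕜 (Fin n)) :
    ((‖⟪v, w⟫_𝕜‖ ^ 2 : ℝ) : 𝕜)
      = ∑ k, ∑ l, star (v k) * (w k * starRingEnd 𝕜 (w l) * v l) := by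
  rw [RCLike.ofReal_pow, ← RCLike.mul_conj, PiLp.inner_apply, map_sum, Finset.sum_mul_sum]
  refine Finset.sum_congr rfl fun k _ => Finset.sum_congr rfl fun l _ => ?_
  simp only [RCLike.inner_apply, map_mul, RCLike.conj_conj, RCLike.star_def]
  ring

lemma dotProduct_mulVec_gramL2 (hΦ : MemLp Φ 2 μ) (v : EuclideanSpace 𝕜 (Fin n)) :
    star (WithLp.ofLp v) ⬝ᵥ (gramL2 μ Φ *ᵥ WithLp.ofLp v)
      = ((∫ x, ‖⟪v, Φ x⟫_𝕜‖ ^ 2 ∂μ : ℝ) : 𝕜) := by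
  have hint k l : Integrable (fun x => star (v k) * (Φ x k * starRingEnd 𝕜 (Φ x l) * v l)) μ :=
    ((integrable_gramL2_integrand hΦ k l).mul_const _).const_mul _
  simp_rw [← integral_ofReal, ofReal_norm_inner_sq_eq_sum, integral_finsetSum _ fun k _ =>
    integrable_finsetSum _ fun l _ => hint k l]
  refine Finset.sum_congr rfl fun k _ => ?_
  simp_rw [integral_finsetSum _ fun l _ => hint k l, Matrix.mulVec, dotProduct, Finset.mul_sum]
  refine Finset.sum_congr rfl fun l _ => ?_
  rw [integral_const_mul, integral_mul_const]
  rfl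

lemma posSemidef_gramL2 (hΦ : MemLp Φ 2 μ) : (gramL2 μ Φ).PosSemidef :=
  Matrix.posSemidef_iff_dotProduct_mulVec.2 ⟨isHermitian_gramL2, fun v => by
    simpa using RCLike.ofReal_nonneg.2 (integral_nonneg fun x => sq_nonneg _)
    |>.trans_eq (dotProduct_mulVec_gramL2 hΦ (WithLp.toLp 2 v)).symm⟩

end Gram

section Frame

variable {μ : Measure X} {n : ℕ} {Φ : X → EuclideanSpace 𝕜 (Fin n)}

lemma IsContFrame.memLp (h : IsContFrame μ Φ) : MemLp Φ 2 μ := by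
  obtain ⟨hmeas, _, _, -, -, hbd⟩ := h
  refine memLp_piLp_iff.2 fun k => (memLp_two_iff_lintegral_nnnorm_sq_lt_top
    ((PiLp.continuous_apply 2 _ k).comp_aestronglyMeasurable hmeas)).2 ?_
  have hk x : ⟪EuclideanSpace.single k (1 : 𝕜), Φ x⟫_𝕜 = Φ x k := by
    simp [EuclideanSpace.inner_single_left]
  simpa [hk] using (hbd (EuclideanSpace.single k 1)).2.trans_lt ofReal_lt_top

lemma IsContFrame.posDef_gramL2 (h : IsContFrame μ Φ) : (gramL2 μ Φ).PosDef := by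
  have hΦ := h.memLp
  obtain ⟨-, A, _, hA, -, hbd⟩ := h
  refine Matrix.posDef_iff_dotProduct_mulVec.2 ⟨isHermitian_gramL2, fun v hv => ?_⟩
  have hv' : 0 < ‖WithLp.toLp 2 v‖ := by simpa using hv
  have hlower := (hbd (WithLp.toLp 2 v)).1
  rw [(hΦ.const_inner _).lintegral_nnnorm_sq_eq,
    ENNReal.ofReal_le_ofReal_iff (integral_nonneg fun _ => sq_nonneg _)] at hlower
  rw [← WithLp.ofLp_toLp 2 v, dotProduct_mulVec_gramL2 hΦ]
  exact RCLike.ofReal_pos.2 ((by positivity : 0 < A * ‖WithLp.toLp 2 v‖ ^ 2).trans_le hlower)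

lemma isContFrame_of_posDef_gramL2 (hΦ : MemLp Φ 2 μ) (hG : (gramL2 μ Φ).PosDef) :
    IsContFrame μ Φ := by
  set q : EuclideanSpace 𝕜 (Fin n) → ℝ := fun v => ∫ x, ‖⟪v, Φ x⟫_𝕜‖ ^ 2 ∂μ
  have hq v : q v = RCLike.re (star (WithLp.ofLp v) ⬝ᵥ (gramL2 μ Φ *ᵥ WithLp.ofLp v)) := by
    rw [dotProduct_mulVec_gramL2 hΦ, RCLike.ofReal_re]
  have hcont : Continuous q := by
    simp_rw [funext hq]
    fun_prop
  have hsmul (r : ℝ) v : q (r • v) = r ^ 2 * q v := by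
    simp only [q, ← integral_const_mul, RCLike.real_smul_eq_coe_smul (K := 𝕜) r v,
      inner_smul_left, RCLike.conj_ofReal, norm_mul, RCLike.norm_ofReal, mul_pow, sq_abs]
  have hpos v (hv : v ≠ 0) : 0 < q v :=
    (hq v).symm ▸ hG.re_dotProduct_pos (by simpa using hv)
  obtain ⟨A, B, hA, hAB, hbd⟩ := exists_bounds_of_continuous_of_homogeneous hcont hsmul hpos
  refine ⟨hΦ.1, A, B, hA, hAB, fun v => ?_⟩
  rw [(hΦ.const_inner v).lintegral_nnnorm_sq_eq]
  exact ⟨ENNReal.ofReal_le_ofReal (hbd v).1, ENNReal.ofReal_le_ofReal (hbd v).2⟩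

theorem isContFrame_iff_posDef_gramL2 :
    IsContFrame μ Φ ↔ MemLp Φ 2 μ ∧ (gramL2 μ Φ).PosDef :=
  ⟨fun h => ⟨h.memLp, h.posDef_gramL2⟩, fun h => isContFrame_of_posDef_gramL2 h.1 h.2⟩

end Frame

theorem stmt_4_general (μ : Measure X) (n : ℕ)
    (Φ : X → EuclideanSpace 𝕜 (Fin n)) :
    IsContFrame μ Φ ↔
      MemLp Φ 2 μ ∧
        RCLike.im ((gramL2 μ Φ).det) = 0 ∧ 0 < RCLike.re ((gramL2 μ Φ).det) := by
  rw [isContFrame_iff_posDef_gramL2]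
  refine and_congr_right fun hΦ => ⟨fun hG => (RCLike.pos_iff.1 hG.det_pos).symm, ?_⟩
  rintro ⟨-, hre⟩
  exact (posSemidef_gramL2 hΦ).posDef_iff_det_ne_zero.2 fun h => by simp [h] at hre

/-- `Φ` is a continuous frame in `𝕜ⁿ` iff `Φ ∈ L²(X, μ; 𝕜ⁿ)` and
`det (Gram (Φ¹, …, Φⁿ)) > 0` (the determinant is a real number, and it is
strictly positive). -/
theorem stmt_4 (μ : Measure X) (n : ℕ) (hn : 0 < n)
    (Φ : X → EuclideanSpace 𝕜 (Fin n)) :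
    IsContFrame μ Φ ↔
      MemLp Φ 2 μ ∧
        RCLike.im ((gramL2 μ Φ).det) = 0 ∧ 0 < RCLike.re ((gramL2 μ Φ).det) :=
  stmt_4_general μ n Φ
end

section
/- With notation as in the main result for F^n: the set of coefficient tuples (c_1,…,c_l) ∈ F^l for which Σ_{i=1}^l c_i(A(i)−U(i)) fails to lie in ⋂_{i=1}^l (𝓕 − U(i)) is contained in a finite union of zero sets of nonzero polynomials, hence has Lebesgue measure zero in F^l. -/
open MeasureTheory ENNReal

variable {𝕜 : Type*} [RCLike 𝕜] {X : Type*} [MeasurableSpace X]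

/-!
Fix `e` and put `Φ_c = ∑ᵢ cᵢ (A i - U i) + U e`, an element of `L²` depending affinely on `c`.
An `L²` family is a continuous frame iff its analysis operator `v ↦ ⟪v, Φ_c ·⟫` is injective,
i.e. iff its `n` coordinate functions are linearly independent in `L²(μ)` (the lower frame bound
comes from antilipschitz continuity of an injective map on a finite-dimensional space). Pairing
these coordinates with those of `Φ_{δ_e} = A e` gives an `n × n` matrix whose determinant is a
polynomial `P_e(c)`; its nonvanishing forces linear independence, and `P_e(δ_e)` is the Gram
determinant of an independent family, so `P_e ≠ 0`. Finally, the zero set of a nonzero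
polynomial is Haar-null, by induction on the number of variables and Fubini.
-/

namespace MvPolynomial

theorem measurable_eval {R σ : Type*} [CommSemiring R] [MeasurableSpace R] [MeasurableAdd₂ R]
    [MeasurableMul₂ R] (p : MvPolynomial σ R) : Measurable fun c : σ → R => eval c p := by
  induction p using MvPolynomial.induction_on with
  | C a => simp
  | add p q hp hq => simp only [map_add]; exact hp.add hq
  | mul_X p i hp => simp only [map_mul, eval_X]; exact hp.mul (measurable_pi_apply i)

theorem measure_pi_zeroSet_eq_zero {K : Type*} [CommRing K] [IsDomain K] [MeasurableSpace K]
    [MeasurableAdd₂ K] [MeasurableMul₂ K] [MeasurableSingletonClass K]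
    (μK : Measure K) [SigmaFinite μK] [NullSingletonClass μK] :
    ∀ {l : ℕ} {p : MvPolynomial (Fin l) K}, p ≠ 0 →
      Measure.pi (fun _ => μK) {c | eval c p = 0} = 0
  | 0, p, hp => by
    obtain ⟨a, rfl⟩ := C_surjective (Fin 0) p
    have ha : a ≠ 0 := by rintro rfl; exact hp C_0
    simp [ha]
  | l + 1, p, hp => by
    set q := finSuccEquiv K l p
    have hq : q ≠ 0 := (EmbeddingLike.map_ne_zero_iff).2 hp
    have hlc := measure_pi_zeroSet_eq_zero μK (Polynomial.leadingCoeff_ne_zero.2 hq)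
    set e := MeasurableEquiv.piFinSuccAbove (fun _ : Fin (l + 1) => K) 0
    have he := (measurePreserving_piFinSuccAbove (fun _ : Fin (l + 1) => μK) 0).symm e
    set T := e.symm ⁻¹' {c | eval c p = 0}
    have hT : MeasurableSet T :=
      e.symm.measurable (measurable_eval p (measurableSet_singleton 0))
    rw [← he.measure_preimage_equiv, Measure.prod_apply_symm hT]
    refine (lintegral_congr_ae ?_).trans lintegral_zero
    filter_upwards [compl_mem_ae_iff.2 hlc] with s hs
    -- off the zero set of `q.leadingCoeff`, the slice is the root set of a nonzero polynomial
    have hqs : q.map (eval s) ≠ 0 := fun h => hs <| by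
      have := congrArg (Polynomial.coeff · q.natDegree) h
      simp only [Polynomial.coeff_map, Polynomial.coeff_zero] at this
      exact this
    have hslice : (fun y => (y, s)) ⁻¹' T = {y | (q.map (eval s)).IsRoot y} := by
      ext y
      simp only [T, e, q, Set.mem_preimage, Set.mem_ofPred_eq,
        MeasurableEquiv.piFinSuccAbove_symm_apply, Fin.insertNthEquiv_zero,
        ← eval_eq_eval_mv_eval', Polynomial.IsRoot.def]
      rfl
    rw [hslice]
    exact (Polynomial.finite_setOfPred_isRoot hqs).measure_zero μK

theorem addHaar_zeroSet_eq_zero {l : ℕ} [m : MeasurableSpace (Fin l → 𝕜)]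
    [BorelSpace (Fin l → 𝕜)] (ν : Measure (Fin l → 𝕜)) [ν.IsAddHaarMeasure]
    {p : MvPolynomial (Fin l) 𝕜} (hp : p ≠ 0) : ν {c | eval c p = 0} = 0 := by
  obtain rfl : m = MeasurableSpace.pi :=
    BorelSpace.measurable_eq.trans (BorelSpace.measurable_eq (self := Pi.borelSpace)).symm
  rw [Measure.isAddLeftInvariant_eq_smul ν (Measure.pi fun _ => Measure.addHaar),
    Measure.smul_apply, measure_pi_zeroSet_eq_zero _ hp, smul_zero]

end MvPolynomial

section LinearIndependence

variable {H : Type*} [NormedAddCommGroup H] [InnerProductSpace 𝕜 H]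
  {ι : Type*} [Fintype ι] [DecidableEq ι]

theorem linearIndependent_of_det_inner_ne_zero {w u : ι → H}
    (h : (Matrix.of fun a b => inner 𝕜 (w a) (u b)).det ≠ 0) : LinearIndependent 𝕜 u := by
  rw [Fintype.linearIndependent_iff]
  intro g hg
  by_contra! hg0
  refine h (Matrix.exists_mulVec_eq_zero_iff.1 ⟨g, fun h => ?_, funext fun a => ?_⟩)
  · obtain ⟨b, hb⟩ := hg0
    exact hb (congrFun h b)
  · simp [Matrix.mulVec, dotProduct, ← inner_smul_right, ← inner_sum, hg, mul_comm]

open scoped ComplexOrder in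
theorem LinearIndependent.exists_mvPolynomial_of_affine {κ : Type*} [Fintype κ]
    (u₀ : ι → H) (u : κ → ι → H) (c₀ : κ → 𝕜)
    (h₀ : LinearIndependent 𝕜 fun b => u₀ b + ∑ k, c₀ k • u k b) :
    ∃ P : MvPolynomial κ 𝕜, P ≠ 0 ∧ ∀ c, MvPolynomial.eval c P ≠ 0 →
      LinearIndependent 𝕜 fun b => u₀ b + ∑ k, c k • u k b := by
  set w := fun b => u₀ b + ∑ k, c₀ k • u k b
  let P : MvPolynomial κ 𝕜 := (Matrix.of fun a b => MvPolynomial.C (inner 𝕜 (w a) (u₀ b)) +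
    ∑ k, MvPolynomial.X k * MvPolynomial.C (inner 𝕜 (w a) (u k b))).det
  have hP (c : κ → 𝕜) : MvPolynomial.eval c P =
      (Matrix.of fun a b => inner 𝕜 (w a) (u₀ b + ∑ k, c k • u k b)).det := by
    rw [RingHom.map_det]
    congr 1
    ext a b
    simp [inner_add_right, inner_sum, inner_smul_right]
  refine ⟨P, fun h => ?_, fun c hc => linearIndependent_of_det_inner_ne_zero ((hP c) ▸ hc)⟩
  have hgram := (Matrix.posDef_gram_of_linearIndependent h₀).det_pos.ne'
  rw [Matrix.gram, ← hP, h, map_zero] at hgram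
  exact hgram rfl

end LinearIndependence

section Frame

variable {μ : Measure X}

theorem MeasureTheory.Lp.lintegral_enorm_sq {F : Type*} [NormedAddCommGroup F] (g : Lp F 2 μ) :
    ∫⁻ x, ‖g x‖ₑ ^ 2 ∂μ = ENNReal.ofReal (‖g‖ ^ 2) := by
  have h := eLpNorm_nnreal_pow_eq_lintegral (f := g) (μ := μ) (p := 2) two_ne_zero
  simp only [NNReal.coe_ofNat, ENNReal.coe_ofNat, ENNReal.rpow_two] at h
  rw [← h, ← Lp.enorm_def, ← ofReal_norm, ENNReal.ofReal_pow (norm_nonneg _)]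

variable {ι : Type*} [Fintype ι]

/-- The analysis operator `v ↦ ⟪v, F ·⟫` of `F ∈ L²`, conjugate-linear in `v` and hence
bundled as an `ℝ`-linear map. -/
noncomputable def analysisOp (F : Lp (EuclideanSpace 𝕜 ι) 2 μ) :
    EuclideanSpace 𝕜 ι →ₗ[ℝ] Lp 𝕜 2 μ where
  toFun v := (innerSL 𝕜 v).compLp F
  map_add' u v := by rw [map_add, ContinuousLinearMap.add_compLp]
  map_smul' r v := by
    rw [RCLike.real_smul_eq_coe_smul (K := 𝕜), map_smulₛₗ, RCLike.conj_ofReal,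
      ContinuousLinearMap.smul_compLp, RingHom.id_apply, RCLike.real_smul_eq_coe_smul (K := 𝕜)]

theorem analysisOp_apply (F : Lp (EuclideanSpace 𝕜 ι) 2 μ) (v : EuclideanSpace 𝕜 ι) :
    analysisOp F v = (innerSL 𝕜 v).compLp F := rfl

theorem lintegral_nnnorm_inner_sq (F : Lp (EuclideanSpace 𝕜 ι) 2 μ) (v : EuclideanSpace 𝕜 ι) :
    ∫⁻ x, (‖(inner 𝕜 v (F x) : 𝕜)‖₊ : ℝ≥0∞) ^ 2 ∂μ = ENNReal.ofReal (‖analysisOp F v‖ ^ 2) := by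
  rw [← Lp.lintegral_enorm_sq]
  refine lintegral_congr_ae ?_
  filter_upwards [ContinuousLinearMap.coeFn_compLp (innerSL 𝕜 v) F] with x hx
  rw [analysisOp_apply, hx, innerSL_apply_apply, enorm_eq_nnnorm]

theorem norm_analysisOp_le (F : Lp (EuclideanSpace 𝕜 ι) 2 μ) (v : EuclideanSpace 𝕜 ι) :
    ‖analysisOp F v‖ ≤ ‖v‖ * ‖F‖ :=
  (ContinuousLinearMap.norm_compLp_le _ F).trans_eq (by rw [innerSL_apply_norm])

open ComplexConjugate in
theorem analysisOp_apply_eq_sum (F : Lp (EuclideanSpace 𝕜 ι) 2 μ) (v : EuclideanSpace 𝕜 ι) :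
    analysisOp F v = ∑ b, conj (v b) • (EuclideanSpace.proj (𝕜 := 𝕜) b).compLp F := by
  have hinner : innerSL 𝕜 v = ∑ b, conj (v b) • EuclideanSpace.proj (𝕜 := 𝕜) b := by
    ext w
    simp [PiLp.inner_apply, mul_comm]
  let compLpHom : StrongDual 𝕜 (EuclideanSpace 𝕜 ι) →+ Lp 𝕜 2 μ :=
    AddMonoidHom.mk' (fun L => L.compLp F) fun L L' => ContinuousLinearMap.add_compLp L L' F
  simp only [analysisOp_apply, hinner, ← ContinuousLinearMap.smul_compLp]
  exact map_sum compLpHom _ _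

open ComplexConjugate in
theorem injective_analysisOp_iff_linearIndependent (F : Lp (EuclideanSpace 𝕜 ι) 2 μ) :
    Function.Injective (analysisOp F) ↔
      LinearIndependent 𝕜 fun b => (EuclideanSpace.proj (𝕜 := 𝕜) b).compLp F := by
  simp only [injective_iff_map_eq_zero, Fintype.linearIndependent_iff, analysisOp_apply_eq_sum]
  constructor
  · intro h g hg b
    have := congrArg (· b) (h (WithLp.toLp 2 fun b => conj (g b)) (by simpa using hg))
    simpa using this
  · intro h v hv
    ext b
    simpa using h _ hv b

variable {n : ℕ}

theorem isContFrame_congr {f g : X → EuclideanSpace 𝕜 (Fin n)} (h : f =ᵐ[μ] g) :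
    IsContFrame μ f ↔ IsContFrame μ g := by
  have hint (v : EuclideanSpace 𝕜 (Fin n)) :
      ∫⁻ x, (‖(inner 𝕜 v (f x) : 𝕜)‖₊ : ℝ≥0∞) ^ 2 ∂μ =
        ∫⁻ x, (‖(inner 𝕜 v (g x) : 𝕜)‖₊ : ℝ≥0∞) ^ 2 ∂μ :=
    lintegral_congr_ae (h.mono fun x hx => by simp only [hx])
  simp only [IsContFrame, aestronglyMeasurable_congr h, hint]

theorem IsContFrame.memLp_s15 {f : X → EuclideanSpace 𝕜 (Fin n)} (hf : IsContFrame μ f) :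
    MemLp f 2 μ := by
  obtain ⟨hmeas, _, _, -, -, hbd⟩ := hf
  refine ⟨hmeas, (eLpNorm_lt_top_iff_lintegral_rpow_enorm_lt_top two_ne_zero ofNat_ne_top).2 ?_⟩
  have hcoord (x : X) : ‖f x‖ₑ ^ (2 : ℝ≥0∞).toReal =
      ∑ b, (‖(inner 𝕜 (EuclideanSpace.single b 1) (f x) : 𝕜)‖₊ : ℝ≥0∞) ^ 2 := by
    simp only [EuclideanSpace.inner_single_left, map_one, one_mul, ENNReal.toReal_ofNat,
      ENNReal.rpow_two, ← enorm_eq_nnnorm, ← ofReal_norm, ← ENNReal.ofReal_pow (norm_nonneg _),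
      EuclideanSpace.norm_sq_eq, ENNReal.ofReal_sum_of_nonneg fun _ _ => sq_nonneg _]
  simp_rw [hcoord]
  rw [lintegral_finsetSum' _ fun b _ => by fun_prop]
  exact ENNReal.sum_lt_top.2 fun b _ => ((hbd _).2.trans_lt ENNReal.ofReal_lt_top)

theorem isContFrame_iff_injective_analysisOp (F : Lp (EuclideanSpace 𝕜 (Fin n)) 2 μ) :
    IsContFrame μ F ↔ Function.Injective (analysisOp F) := by
  simp only [IsContFrame, lintegral_nnnorm_inner_sq, Lp.aestronglyMeasurable, true_and]
  constructor
  · rintro ⟨A, _, hA, _, hbd⟩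
    refine (injective_iff_map_eq_zero _).2 fun v hv => ?_
    have := (hbd v).1
    rw [hv, norm_zero, zero_pow two_ne_zero, ENNReal.ofReal_zero, nonpos_iff_eq_zero,
      ENNReal.ofReal_eq_zero] at this
    have : ‖v‖ ^ 2 ≤ 0 := nonpos_of_mul_nonpos_right this hA
    simpa using this
  · intro hinj
    obtain ⟨K, hK, hanti⟩ := (analysisOp F).exists_antilipschitzWith
      (LinearMap.ker_eq_bot.2 hinj)
    refine ⟨(K : ℝ)⁻¹ ^ 2, max ((K : ℝ)⁻¹ ^ 2) (‖F‖ ^ 2), by positivity, le_max_left _ _,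
      fun v => ⟨ENNReal.ofReal_le_ofReal ?_, ENNReal.ofReal_le_ofReal ?_⟩⟩
    · have := ZeroHomClass.bound_of_antilipschitz _ hanti v
      rw [← mul_pow]
      gcongr
      rw [inv_mul_le_iff₀ (by positivity)]
      exact this
    · calc ‖analysisOp F v‖ ^ 2 ≤ ‖F‖ ^ 2 * ‖v‖ ^ 2 := by
            rw [← mul_pow, mul_comm]; gcongr; exact norm_analysisOp_le F v
        _ ≤ _ := by gcongr; exact le_max_right _ _

theorem isContFrame_iff_linearIndependent (F : Lp (EuclideanSpace 𝕜 (Fin n)) 2 μ) :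
    IsContFrame μ F ↔ LinearIndependent 𝕜 fun b => (EuclideanSpace.proj (𝕜 := 𝕜) b).compLp F :=
  (isContFrame_iff_injective_analysisOp F).trans (injective_analysisOp_iff_linearIndependent F)

theorem exists_mvPolynomial_isContFrame_of_affine {κ : Type*} [Fintype κ]
    (F₀ : Lp (EuclideanSpace 𝕜 (Fin n)) 2 μ) (F : κ → Lp (EuclideanSpace 𝕜 (Fin n)) 2 μ)
    (c₀ : κ → 𝕜) (h₀ : IsContFrame μ ⇑(F₀ + ∑ k, c₀ k • F k)) :
    ∃ P : MvPolynomial κ 𝕜, P ≠ 0 ∧ ∀ c, MvPolynomial.eval c P ≠ 0 →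
      IsContFrame μ ⇑(F₀ + ∑ k, c k • F k) := by
  have hexpand (b : Fin n) (c : κ → 𝕜) :
      (EuclideanSpace.proj (𝕜 := 𝕜) b).compLp (F₀ + ∑ k, c k • F k) =
        (EuclideanSpace.proj (𝕜 := 𝕜) b).compLp F₀ +
          ∑ k, c k • (EuclideanSpace.proj (𝕜 := 𝕜) b).compLp (F k) := by
    simp only [← ContinuousLinearMap.compLpₗ_apply 2 μ, map_add, map_sum, map_smul]
  simp only [isContFrame_iff_linearIndependent, hexpand] at h₀ ⊢
  exact LinearIndependent.exists_mvPolynomial_of_affine _ _ c₀ h₀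

theorem exists_mvPolynomial_isContFrame {l : ℕ} (U A : Fin l → X → EuclideanSpace 𝕜 (Fin n))
    (hU : ∀ i, MemLp (U i) 2 μ) (hA : ∀ i, IsContFrame μ (A i)) (e : Fin l) :
    ∃ P : MvPolynomial (Fin l) 𝕜, P ≠ 0 ∧ ∀ c, MvPolynomial.eval c P ≠ 0 →
      IsContFrame μ fun x => (∑ i, c i • (A i x - U i x)) + U e x := by
  set Ũ := fun i => (hU i).toLp (U i)
  set Ã := fun i => (hA i).memLp_s15.toLp (A i)
  have hδ : Ũ e + ∑ i, (Pi.single e 1 : Fin l → 𝕜) i • (Ã i - Ũ i) = Ã e := by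
    simp [Pi.single_apply]
  obtain ⟨P, hP, hPc⟩ := exists_mvPolynomial_isContFrame_of_affine (Ũ e) (fun i => Ã i - Ũ i)
    (Pi.single e 1) (hδ ▸ (isContFrame_congr (hA e).memLp_s15.coeFn_toLp).2 (hA e))
  refine ⟨P, hP, fun c hc => (isContFrame_congr ?_).2 (hPc c hc)⟩
  filter_upwards [Lp.coeFn_add (Ũ e) (∑ i, c i • (Ã i - Ũ i)),
    Lp.coeFn_fun_finsetSum Finset.univ fun i => c i • (Ã i - Ũ i),
    ae_all_iff.2 fun i => Lp.coeFn_smul (c i) (Ã i - Ũ i),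
    ae_all_iff.2 fun i => Lp.coeFn_sub (Ã i) (Ũ i),
    (ae_all_iff.2 fun i => (hU i).coeFn_toLp : ∀ᵐ x ∂μ, ∀ i, Ũ i x = U i x),
    (ae_all_iff.2 fun i => (hA i).memLp_s15.coeFn_toLp : ∀ᵐ x ∂μ, ∀ i, Ã i x = A i x)]
    with x hadd hsum hsmul hsub hUx hAx
  rw [hadd, Pi.add_apply, hsum, add_comm]
  simp only [hsmul, Pi.smul_apply, hsub, Pi.sub_apply, hUx, hAx]

end Frame

theorem stmt_15_general (μ : Measure X) (n l : ℕ)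
    (U A : Fin l → X → EuclideanSpace 𝕜 (Fin n))
    (hU : ∀ i, MemLp (U i) 2 μ) (hA : ∀ i, IsContFrame μ (A i))
    [MeasurableSpace (Fin l → 𝕜)] [BorelSpace (Fin l → 𝕜)]
    (ν : Measure (Fin l → 𝕜)) [ν.IsAddHaarMeasure] :
    ∃ P : Fin l → MvPolynomial (Fin l) 𝕜, (∀ i, P i ≠ 0) ∧
      ({c : Fin l → 𝕜 |
          ¬ ∀ e : Fin l,
              IsContFrame μ (fun x => (∑ i, c i • (A i x - U i x)) + U e x)} ⊆
        ⋃ i : Fin l, {c : Fin l → 𝕜 | MvPolynomial.eval c (P i) = 0}) ∧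
      ν {c : Fin l → 𝕜 |
          ¬ ∀ e : Fin l,
              IsContFrame μ (fun x => (∑ i, c i • (A i x - U i x)) + U e x)} = 0 := by
  choose P hP0 hPframe using exists_mvPolynomial_isContFrame U A hU hA
  have hsub : {c : Fin l → 𝕜 |
      ¬ ∀ e : Fin l, IsContFrame μ (fun x => (∑ i, c i • (A i x - U i x)) + U e x)} ⊆
      ⋃ i : Fin l, {c : Fin l → 𝕜 | MvPolynomial.eval c (P i) = 0} := by
    intro c hc
    simp only [Set.mem_iUnion, Set.mem_ofPred_eq]
    by_contra! h
    exact hc fun e => hPframe e c (h e)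
  exact ⟨P, hP0, hsub, measure_mono_null hsub
    (measure_iUnion_null fun e => MvPolynomial.addHaar_zeroSet_eq_zero ν (hP0 e))⟩

/-- With `U(i) ∈ L²(X, μ; 𝕜ⁿ)` and `A(i)` continuous frames in `𝕜ⁿ`: the set of
coefficient tuples `c ∈ 𝕜ˡ` for which `Σᵢ cᵢ (A(i) − U(i))` fails to lie in
`⋂ᵢ (𝓕 − U(i))` is contained in a finite union of zero sets of nonzero
polynomials, hence has Lebesgue (Haar) measure zero in `𝕜ˡ`. -/
theorem stmt_15 (μ : Measure X) (n l : ℕ) (hn : 0 < n) (hl : 0 < l)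
    (U A : Fin l → X → EuclideanSpace 𝕜 (Fin n))
    (hU : ∀ i, MemLp (U i) 2 μ) (hA : ∀ i, IsContFrame μ (A i))
    [MeasurableSpace (Fin l → 𝕜)] [BorelSpace (Fin l → 𝕜)]
    (ν : Measure (Fin l → 𝕜)) [ν.IsAddHaarMeasure] :
    ∃ P : Fin l → MvPolynomial (Fin l) 𝕜, (∀ i, P i ≠ 0) ∧
      ({c : Fin l → 𝕜 |
          ¬ ∀ e : Fin l,
              IsContFrame μ (fun x => (∑ i, c i • (A i x - U i x)) + U e x)} ⊆
        ⋃ i : Fin l, {c : Fin l → 𝕜 | MvPolynomial.eval c (P i) = 0}) ∧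
      ν {c : Fin l → 𝕜 |
          ¬ ∀ e : Fin l,
              IsContFrame μ (fun x => (∑ i, c i • (A i x - U i x)) + U e x)} = 0 :=
  stmt_15_general μ n l U A hU hA ν
end
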